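/- For any completely positive trace-decreasing map E on density operators, and any two density operators ρ and σ with t(E|ρ) > 0 and t(E|σ) > 0, the trace distance D(ρ,σ) := (1/2)Tr|ρ − σ| satisfies D(ρ,σ) ≥ t(E|ρ) · D(E[ρ]/t(E|ρ), E[σ]/t(E|σ)). -/

import Mathlib

open Matrix Kronecker MeasureTheory ComplexOrder

noncomputable section

def msqrt {α : Type*} [Fintype α] [DecidableEq α] (A : Matrix α α ℂ) : Matrix α α ℂ :=
  open scoped Classical in
  if h : A.PosSemidef then (h.1.eigenvectorUnitary : Matrix α α ℂ) *
      diagonal ((↑) ∘ Real.sqrt ∘ h.1.eigenvalues) * (star (h.1.eigenvectorUnitary : Matrix α α ℂ))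
    else 0

def fid {α : Type*} [Fintype α] [DecidableEq α] (ρ σ : Matrix α α ℂ) : ℝ :=
  ((msqrt (msqrt ρ * σ * msqrt ρ)).trace).re ^ 2

def sineDist {α : Type*} [Fintype α] [DecidableEq α] (ρ σ : Matrix α α ℂ) : ℝ :=
  Real.sqrt (1 - fid ρ σ)

def traceDist {α : Type*} [Fintype α] [DecidableEq α] (ρ σ : Matrix α α ℂ) : ℝ :=
  (1/2) * ((msqrt ((ρ - σ)ᴴ * (ρ - σ))).trace).re

def IsDensity {α : Type*} [Fintype α] (ρ : Matrix α α ℂ) : Prop :=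
  ρ.PosSemidef ∧ ρ.trace = 1

def IsPureState {α : Type*} [Fintype α] (ρ : Matrix α α ℂ) : Prop :=
  IsDensity ρ ∧ ∃ ψ : α → ℂ, ρ = Matrix.vecMulVec ψ (star ψ)

def tr' {α : Type*} [Fintype α] (A : Matrix α α ℂ) : ℝ := A.trace.re

def nstate {α : Type*} [Fintype α] (ρ : Matrix α α ℂ) : Matrix α α ℂ :=
  (((tr' ρ : ℝ) : ℂ))⁻¹ • ρ

def IsCPTD {α β : Type*} [Fintype α] [Fintype β] [DecidableEq α] [DecidableEq β]
    (E : Matrix α α ℂ →ₗ[ℂ] Matrix β β ℂ) : Prop :=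
  ∃ (k : ℕ) (K : Fin k → Matrix β α ℂ),
    (∀ ρ, E ρ = ∑ i, K i * ρ * (K i)ᴴ) ∧ (1 - ∑ i, (K i)ᴴ * K i).PosSemidef

def IsCPTP {α β : Type*} [Fintype α] [Fintype β] [DecidableEq α] [DecidableEq β]
    (E : Matrix α α ℂ →ₗ[ℂ] Matrix β β ℂ) : Prop :=
  ∃ (k : ℕ) (K : Fin k → Matrix β α ℂ),
    (∀ ρ, E ρ = ∑ i, K i * ρ * (K i)ᴴ) ∧ (∑ i, (K i)ᴴ * K i = 1)

def tensId {α β γ : Type*} [Fintype α]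
    (E : Matrix α α ℂ → Matrix β β ℂ)
    (ρ : Matrix (α × γ) (α × γ) ℂ) : Matrix (β × γ) (β × γ) ℂ :=
  Matrix.of fun p q => E (Matrix.of fun a b => ρ (a, p.2) (b, q.2)) p.1 q.1

def maxEnt (d : ℕ) : Matrix (Fin d × Fin d) (Fin d × Fin d) ℂ :=
  Matrix.of fun p q => if p.1 = p.2 ∧ q.1 = q.2 then ((d : ℂ))⁻¹ else 0

def ptraceSnd {α β : Type*} [Fintype β] (ρ : Matrix (α × β) (α × β) ℂ) : Matrix α α ℂ :=
  Matrix.of fun a b => ∑ j, ρ (a, j) (b, j)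

def ptraceFst {α β : Type*} [Fintype α] (ρ : Matrix (α × β) (α × β) ℂ) : Matrix β β ℂ :=
  Matrix.of fun i j => ∑ a, ρ (a, i) (a, j)

def choiSine {m n : ℕ} (E₁ E₂ : Matrix (Fin m) (Fin m) ℂ →ₗ[ℂ] Matrix (Fin n) (Fin n) ℂ) : ℝ :=
  sineDist (nstate (tensId (⇑E₁) (maxEnt m))) (nstate (tensId (⇑E₂) (maxEnt m)))

def diamondSine {m n : ℕ} (E₁ E₂ : Matrix (Fin m) (Fin m) ℂ →ₗ[ℂ] Matrix (Fin n) (Fin n) ℂ) : ℝ :=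
  sSup { x | ∃ ρ : Matrix (Fin m × Fin m) (Fin m × Fin m) ℂ, IsPureState ρ ∧
    tr' (tensId (⇑E₁) ρ) ≠ 0 ∧ tr' (tensId (⇑E₂) ρ) ≠ 0 ∧
    x = sineDist (nstate (tensId (⇑E₁) ρ)) (nstate (tensId (⇑E₂) ρ)) }

/-! For operators with equal trace, `D(ρ, σ) = Tr (ρ - σ)⁺ = max_{0 ≤ M ≤ 1} Re Tr (M (ρ - σ))`.
Let `t = Tr E[ρ]`, `s = Tr E[σ]` and suppose `s ≤ t`. With `M` the spectral projection onto the
positive part of `E[ρ]/t - E[σ]/s`,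
`t · D(E[ρ]/t, E[σ]/s) = Re Tr (M (E[ρ] - E[σ])) - (t/s - 1) Re Tr (M E[σ]) ≤ Re Tr (M E[ρ - σ])`,
and splitting `ρ - σ = (ρ - σ)⁺ - (ρ - σ)⁻`, positivity and trace non-increase of `E` bound the
right-hand side by `Tr (ρ - σ)⁺`. If `t ≤ s`, the same argument with `ρ, σ` exchanged gives
`t · D ≤ s · D ≤ D(σ, ρ)`. -/

open scoped MatrixOrder

section

variable {n : Type*} [Fintype n]

lemma re_trace_nonneg {A : Matrix n n ℂ} (hA : 0 ≤ A) : 0 ≤ A.trace.re :=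
  (Complex.nonneg_iff.mp hA.posSemidef.trace_nonneg).1

lemma Matrix.IsHermitian.ofReal_re_trace {A : Matrix n n ℂ} (hA : A.IsHermitian) :
    ((A.trace.re : ℝ) : ℂ) = A.trace :=
  Complex.conj_eq_iff_re.mp (by simpa [hA.eq] using (trace_conjTranspose A).symm)

lemma trace_nstate {A : Matrix n n ℂ} (hA : A.IsHermitian) (h : tr' A ≠ 0) :
    (nstate A).trace = 1 := by
  rw [nstate, trace_smul, tr', hA.ofReal_re_trace, smul_eq_mul,
    inv_mul_cancel₀ (by rwa [← hA.ofReal_re_trace, Complex.ofReal_ne_zero])]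

lemma isSelfAdjoint_nstate {A : Matrix n n ℂ} (hA : IsSelfAdjoint A) :
    IsSelfAdjoint (nstate A) :=
  IsSelfAdjoint.smul (by simp [IsSelfAdjoint]) hA

end

section

variable {n : Type*} [Fintype n] [DecidableEq n]

lemma re_trace_mul_nonneg {A B : Matrix n n ℂ} (hA : 0 ≤ A) (hB : 0 ≤ B) :
    0 ≤ (A * B).trace.re := by
  obtain ⟨C, rfl⟩ := CStarAlgebra.nonneg_iff_eq_star_mul_self.mp hB
  rw [← Matrix.mul_assoc, trace_mul_cycle]
  exact re_trace_nonneg (hA.posSemidef.mul_mul_conjTranspose_same C).nonneg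

lemma re_trace_mul_le {M A : Matrix n n ℂ} (hM : M ≤ 1) (hA : 0 ≤ A) :
    (M * A).trace.re ≤ A.trace.re := by
  have h := re_trace_mul_nonneg (sub_nonneg.mpr hM) hA
  rwa [Matrix.sub_mul, Matrix.one_mul, trace_sub, Complex.sub_re, sub_nonneg] at h

lemma msqrt_eq_sqrt {A : Matrix n n ℂ} (hA : A.PosSemidef) : msqrt A = CFC.sqrt A := by
  rw [msqrt, dif_pos hA, CFC.sqrt_eq_real_sqrt A hA.nonneg, cfcₙ_eq_cfc, hA.1.cfc_eq,
    IsHermitian.cfc, Unitary.conjStarAlgAut_apply]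
  rfl

lemma traceDist_eq_abs (A B : Matrix n n ℂ) :
    traceDist A B = 1 / 2 * (CFC.abs (A - B)).trace.re := by
  rw [traceDist, msqrt_eq_sqrt (posSemidef_conjTranspose_mul_self _)]
  rfl

lemma traceDist_comm (A B : Matrix n n ℂ) : traceDist A B = traceDist B A := by
  rw [traceDist_eq_abs, traceDist_eq_abs, ← CFC.abs_neg, neg_sub]

lemma traceDist_nonneg (A B : Matrix n n ℂ) : 0 ≤ traceDist A B := by
  rw [traceDist_eq_abs]
  exact mul_nonneg (by norm_num) (re_trace_nonneg (CFC.abs_nonneg _))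

lemma traceDist_eq_trace_posPart {A B : Matrix n n ℂ} (hAB : IsSelfAdjoint (A - B))
    (htr : A.trace = B.trace) : traceDist A B = ((A - B)⁺).trace.re := by
  have h := congrArg (fun X => X.trace.re) (CFC.abs_add_self (A - B) hAB)
  simp only [trace_add, trace_sub, htr, sub_self, add_zero, trace_smul] at h
  rw [traceDist_eq_abs, h]
  simp

lemma exists_mul_eq_posPart {Z : Matrix n n ℂ} (hZ : IsSelfAdjoint Z) :
    ∃ M : Matrix n n ℂ, 0 ≤ M ∧ M ≤ 1 ∧ M * Z = Z⁺ := by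
  set f : ℝ → ℝ := fun x => if 0 < x then 1 else 0
  refine ⟨cfc f Z, cfc_nonneg fun x _ => by positivity,
    cfc_le_one f Z fun x _ => by simp only [f]; split_ifs <;> norm_num, ?_⟩
  conv_lhs => arg 2; rw [← cfc_id' ℝ Z]
  rw [← cfc_mul f _ Z ((Set.toFinite _).continuousOn f), CFC.posPart_def, cfcₙ_eq_cfc]
  refine cfc_congr fun x _ => ?_
  simp only [f]
  split_ifs with hx
  · simp [posPart_eq_self.mpr hx.le]
  · simp [posPart_eq_zero.mpr (not_lt.mp hx)]

lemma mul_traceDist_nstate_le {A B : Matrix n n ℂ} (hA : A.IsHermitian) (hB : 0 ≤ B)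
    (hB₀ : 0 < tr' B) (hBA : tr' B ≤ tr' A) {d : ℝ}
    (hd : ∀ M : Matrix n n ℂ, 0 ≤ M → M ≤ 1 → (M * (A - B)).trace.re ≤ d) :
    tr' A * traceDist (nstate A) (nstate B) ≤ d := by
  set t := tr' A
  set s := tr' B
  set Z := nstate A - nstate B
  have hZ : IsSelfAdjoint Z :=
    (isSelfAdjoint_nstate hA).sub (isSelfAdjoint_nstate hB.posSemidef.1)
  have htr : (nstate A).trace = (nstate B).trace := by
    rw [trace_nstate hA (hB₀.trans_le hBA).ne', trace_nstate hB.posSemidef.1 hB₀.ne']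
  obtain ⟨M, hM₀, hM₁, hMZ⟩ := exists_mul_eq_posPart hZ
  have hscale : (t : ℂ) • Z = (A - B) - ((t / s - 1 : ℝ) : ℂ) • B := by
    have ht : (t : ℂ) ≠ 0 := Complex.ofReal_ne_zero.mpr (hB₀.trans_le hBA).ne'
    change (t : ℂ) • ((t : ℂ)⁻¹ • A - (s : ℂ)⁻¹ • B) = _
    push_cast
    rw [smul_sub, smul_smul, smul_smul, mul_inv_cancel₀ ht, one_smul, sub_smul, one_smul,
      div_eq_mul_inv]
    abel
  have hts : 0 ≤ t / s - 1 := by rw [sub_nonneg, one_le_div hB₀]; exact hBA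
  rw [traceDist_eq_trace_posPart hZ htr, ← hMZ]
  calc t * (M * Z).trace.re = (M * ((t : ℂ) • Z)).trace.re := by
        rw [mul_smul_comm, trace_smul, smul_eq_mul, Complex.re_ofReal_mul]
    _ = (M * (A - B)).trace.re - (t / s - 1) * (M * B).trace.re := by
        rw [hscale, Matrix.mul_sub, mul_smul_comm, trace_sub, trace_smul, Complex.sub_re,
          smul_eq_mul, Complex.re_ofReal_mul]
    _ ≤ (M * (A - B)).trace.re := sub_le_self _ (mul_nonneg hts (re_trace_mul_nonneg hM₀ hB))
    _ ≤ d := hd M hM₀ hM₁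

end

section

variable {α β : Type*} [Fintype α] [Fintype β] [DecidableEq α] [DecidableEq β]
  {E : Matrix α α ℂ →ₗ[ℂ] Matrix β β ℂ}

lemma IsCPTD.map_nonneg (hE : IsCPTD E) {A : Matrix α α ℂ} (hA : 0 ≤ A) : 0 ≤ E A := by
  obtain ⟨k, K, hK, -⟩ := hE
  rw [hK]
  exact Finset.sum_nonneg fun i _ => (hA.posSemidef.mul_mul_conjTranspose_same (K i)).nonneg

lemma IsCPTD.re_trace_map_le (hE : IsCPTD E) {A : Matrix α α ℂ} (hA : 0 ≤ A) :
    (E A).trace.re ≤ A.trace.re := by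
  obtain ⟨k, K, hK, hTD⟩ := hE
  have hcycle : (E A).trace = ((∑ i, (K i)ᴴ * K i) * A).trace := by
    simp only [hK, trace_sum, Finset.sum_mul]
    exact Finset.sum_congr rfl fun i _ => by rw [trace_mul_cycle, Matrix.mul_assoc]
  rw [hcycle]
  exact re_trace_mul_le (sub_nonneg.mp hTD.nonneg) hA

lemma IsCPTD.re_trace_mul_map_le (hE : IsCPTD E) {X : Matrix α α ℂ} (hX : IsSelfAdjoint X)
    {M : Matrix β β ℂ} (hM₀ : 0 ≤ M) (hM₁ : M ≤ 1) :
    (M * E X).trace.re ≤ (X⁺).trace.re := by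
  have hpos := hE.map_nonneg (CFC.posPart_nonneg X)
  have hneg := re_trace_mul_nonneg hM₀ (hE.map_nonneg (CFC.negPart_nonneg X))
  have hJordan : E X = E X⁺ - E X⁻ := by rw [← map_sub, CFC.posPart_sub_negPart X hX]
  rw [hJordan, Matrix.mul_sub, trace_sub, Complex.sub_re]
  linarith [re_trace_mul_le hM₁ hpos, hE.re_trace_map_le (CFC.posPart_nonneg X)]

lemma IsCPTD.re_trace_mul_map_sub_le_traceDist (hE : IsCPTD E) {ρ σ : Matrix α α ℂ}
    (hρ : ρ.IsHermitian) (hσ : σ.IsHermitian) (htr : ρ.trace = σ.trace)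
    {M : Matrix β β ℂ} (hM₀ : 0 ≤ M) (hM₁ : M ≤ 1) :
    (M * (E ρ - E σ)).trace.re ≤ traceDist ρ σ := by
  have hρσ : IsSelfAdjoint (ρ - σ) := hρ.sub hσ
  rw [traceDist_eq_trace_posPart hρσ htr, ← map_sub]
  exact hE.re_trace_mul_map_le hρσ hM₀ hM₁

end

/-- Extended processing inequality for the trace distance under CPTD maps. -/
theorem extended_processing_inequality_trace {m n : ℕ}
    (E : Matrix (Fin m) (Fin m) ℂ →ₗ[ℂ] Matrix (Fin n) (Fin n) ℂ) (hE : IsCPTD E)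
    (ρ σ : Matrix (Fin m) (Fin m) ℂ) (hρ : IsDensity ρ) (hσ : IsDensity σ)
    (htρ : 0 < tr' (E ρ)) (htσ : 0 < tr' (E σ)) :
    tr' (E ρ) * traceDist (nstate (E ρ)) (nstate (E σ)) ≤ traceDist ρ σ := by
  have hEρ := hE.map_nonneg hρ.1.nonneg
  have hEσ := hE.map_nonneg hσ.1.nonneg
  have htr : ρ.trace = σ.trace := hρ.2.trans hσ.2.symm
  rcases le_total (tr' (E σ)) (tr' (E ρ)) with h | h
  · exact mul_traceDist_nstate_le hEρ.posSemidef.1 hEσ htσ h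
      fun M hM₀ hM₁ => hE.re_trace_mul_map_sub_le_traceDist hρ.1.1 hσ.1.1 htr hM₀ hM₁
  · calc tr' (E ρ) * traceDist (nstate (E ρ)) (nstate (E σ))
        ≤ tr' (E σ) * traceDist (nstate (E σ)) (nstate (E ρ)) := by
          rw [traceDist_comm]
          exact mul_le_mul_of_nonneg_right h (traceDist_nonneg _ _)
      _ ≤ traceDist σ ρ :=
          mul_traceDist_nstate_le hEσ.posSemidef.1 hEρ htρ h fun M hM₀ hM₁ =>
            hE.re_trace_mul_map_sub_le_traceDist hσ.1.1 hρ.1.1 htr.symm hM₀ hM₁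
      _ = traceDist ρ σ := traceDist_comm σ ρ
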